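/- Let g be a finite-dimensional nilpotent real Lie algebra with an integrable complex structure I, and let η be a closed semipositive Hermitian form on (g, I) whose null-space N(η) is a holomorphic Lie subalgebra. Let g = g⁰ ⊇ g¹ ⊇ g² ⊇ … be the lower central series, g^{i+1} = [g, g^i]. Then for every i ≥ 0: if [N(η), g^{i+1}] ⊆ N(η), then [N(η), g^i] ⊆ N(η). -/

import Mathlib

/-!
By Cauchy–Schwarz for the semipositive symmetric form `η(·, I ·)`, the null-space `N(η)` is the
kernel of `η`. For `x ∈ N(η)`, closedness makes `(u, v) ↦ η ⁅x, u⁆ v` symmetric, and the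
holomorphicity of `N(η)` together with integrability of `I` gives
`η ⁅x, u⁆ v = η ⁅x, I u⁆ (I v)`. Hence for `y ∈ gⁱ` and `w = ⁅x, y⁆ ∈ gⁱ⁺¹`,
`η w (I w) = η ⁅x, I w⁆ y = -η ⁅x, w⁆ (I y) = 0`, since `⁅x, w⁆ ∈ N(η)` by hypothesis.
-/

section ComplexStructure

variable {R V : Type*} [CommRing R] [AddCommGroup V] [Module R V]
  {I : V →ₗ[R] V} {η : V →ₗ[R] V →ₗ[R] R}

lemma apply_left_eq_neg_apply_right (hI : ∀ x, I (I x) = -x)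
    (hinv : ∀ x y, η (I x) (I y) = η x y) (u v : V) : η (I u) v = -η u (I v) := by
  have h := hinv u (I v)
  rw [hI, map_neg] at h
  linear_combination -h

lemma isSymm_compl₂_of_isAlt (hI : ∀ x, I (I x) = -x) (halt : η.IsAlt)
    (hinv : ∀ x y, η (I x) (I y) = η x y) : (η.compl₂ I).IsSymm := by
  refine LinearMap.isSymm_def.mpr fun u v ↦ ?_
  rw [RingHom.id_apply, LinearMap.compl₂_apply, LinearMap.compl₂_apply, ← halt.neg (I u) v,
    apply_left_eq_neg_apply_right hI hinv, neg_neg]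

lemma mem_ker_of_mem_ker_compl₂ (hI : ∀ x, I (I x) = -x) {x : V}
    (hx : x ∈ LinearMap.ker (η.compl₂ I)) : x ∈ LinearMap.ker η := by
  ext z
  simpa [hI] using LinearMap.congr_fun (LinearMap.mem_ker.mp hx) (-I z)

lemma mem_ker_of_apply_map_self_eq_zero [LinearOrder R] [IsStrictOrderedRing R]
    (hI : ∀ x, I (I x) = -x) (halt : η.IsAlt) (hinv : ∀ x y, η (I x) (I y) = η x y)
    (hpos : ∀ x, 0 ≤ η x (I x)) {x : V} (hx : η x (I x) = 0) : x ∈ LinearMap.ker η :=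
  mem_ker_of_mem_ker_compl₂ hI <|
    (LinearMap.BilinForm.apply_apply_same_eq_zero_iff _ hpos
      (isSymm_compl₂_of_isAlt hI halt hinv)).mp hx

end ComplexStructure

section LieAlgebra

variable {R g : Type*} [CommRing R] [LieRing g] [LieAlgebra R g] {η : g →ₗ[R] g →ₗ[R] R}

lemma apply_lie_comm_of_mem_ker (halt : η.IsAlt)
    (hclosed : ∀ x y z : g, η ⁅x, y⁆ z + η ⁅y, z⁆ x + η ⁅z, x⁆ y = 0)
    {x : g} (hx : x ∈ LinearMap.ker η) (u v : g) : η ⁅x, u⁆ v = η ⁅x, v⁆ u := by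
  have hxuv : η ⁅u, v⁆ x = 0 := by
    rw [← halt.neg x, LinearMap.mem_ker.mp hx, LinearMap.zero_apply, neg_zero]
  have hvx : η ⁅v, x⁆ u = -η ⁅x, v⁆ u := by
    rw [← lie_skew v x, map_neg, LinearMap.neg_apply]
  linear_combination hclosed x u v - hxuv - hvx

lemma apply_lie_eq_apply_lie_map_map {I : g →ₗ[R] g} (hI : ∀ x, I (I x) = -x)
    (hint : ∀ x y : g, ⁅I x, I y⁆ = ⁅x, y⁆ + I ⁅I x, y⁆ + I ⁅x, I y⁆)
    (hinv : ∀ x y, η (I x) (I y) = η x y) [IsAddTorsionFree R] {x u : g}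
    (hhol : ⁅u, x⁆ + ⁅I u, I x⁆ + I ⁅I u, x⁆ - I ⁅u, I x⁆ ∈ LinearMap.ker η) (v : g) :
    η ⁅x, u⁆ v = η ⁅x, I u⁆ (I v) := by
  have hslide := apply_left_eq_neg_apply_right hI hinv
  have hholv := LinearMap.congr_fun (LinearMap.mem_ker.mp hhol) v
  rw [← lie_skew u x, ← lie_skew (I u) (I x), ← lie_skew u (I x), ← lie_skew (I u) x,
    hint] at hholv
  simp only [map_add, map_sub, map_neg, LinearMap.add_apply, LinearMap.sub_apply,
    LinearMap.neg_apply, LinearMap.zero_apply, hslide] at hholv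
  apply nsmul_right_injective two_ne_zero
  simp only [two_nsmul]
  linear_combination -hholv

end LieAlgebra

theorem lcs_induction_step_general
    (g : Type*) [LieRing g] [LieAlgebra ℝ g]
    (I : g →ₗ[ℝ] g) (hI : ∀ x, I (I x) = -x)
    (hint : ∀ x y : g, ⁅I x, I y⁆ = ⁅x, y⁆ + I ⁅I x, y⁆ + I ⁅x, I y⁆)
    (η : g →ₗ[ℝ] g →ₗ[ℝ] ℝ) (halt : ∀ x, η x x = 0)
    (hinv : ∀ x y, η (I x) (I y) = η x y)
    (hpos : ∀ x, 0 ≤ η x (I x))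
    (hclosed : ∀ x y z : g, η ⁅x, y⁆ z + η ⁅y, z⁆ x + η ⁅z, x⁆ y = 0)
    (N : Set g) (hN : N = {x : g | η x (I x) = 0})
    -- `N(η)` is `I`-invariant and holomorphic:
    (hNhol : ∀ x ∈ N, ∀ y : g,
      ⁅y, x⁆ + ⁅I y, I x⁆ + I ⁅I y, x⁆ - I ⁅y, I x⁆ ∈ N) :
    ∀ i : ℕ,
      (∀ x ∈ N, ∀ y ∈ LieModule.lowerCentralSeries ℝ g g (i + 1), ⁅x, y⁆ ∈ N) →
      (∀ x ∈ N, ∀ y ∈ LieModule.lowerCentralSeries ℝ g g i, ⁅x, y⁆ ∈ N) := by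
  subst hN
  have hker : ∀ z : g, η z (I z) = 0 → z ∈ LinearMap.ker η :=
    fun _ ↦ mem_ker_of_apply_map_self_eq_zero hI halt hinv hpos
  intro i hi x hx y hy
  set w := ⁅x, y⁆
  have hw : w ∈ LieModule.lowerCentralSeries ℝ g g (i + 1) := by
    rw [LieModule.lowerCentralSeries_succ]
    exact LieSubmodule.lie_mem_lie (LieSubmodule.mem_top x) hy
  have hxw : η ⁅x, w⁆ = 0 := LinearMap.mem_ker.mp (hker _ (hi x hx w hw))
  calc η w (I w) = η ⁅x, I w⁆ y := apply_lie_comm_of_mem_ker halt hclosed (hker x hx) y (I w)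
    _ = η ⁅x, I (I w)⁆ (I y) :=
      apply_lie_eq_apply_lie_map_map hI hint hinv (hker _ (hNhol x hx (I w))) y
    _ = 0 := by
      rw [hI, lie_neg, map_neg, LinearMap.neg_apply, hxw, LinearMap.zero_apply, neg_zero]

theorem lcs_induction_step
    (g : Type*) [LieRing g] [LieAlgebra ℝ g] [FiniteDimensional ℝ g]
    [LieRing.IsNilpotent g]
    (I : g →ₗ[ℝ] g) (hI : ∀ x, I (I x) = -x)
    (hint : ∀ x y : g, ⁅I x, I y⁆ = ⁅x, y⁆ + I ⁅I x, y⁆ + I ⁅x, I y⁆)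
    (η : g →ₗ[ℝ] g →ₗ[ℝ] ℝ) (halt : ∀ x, η x x = 0)
    (hinv : ∀ x y, η (I x) (I y) = η x y)
    (hpos : ∀ x, 0 ≤ η x (I x))
    (hclosed : ∀ x y z : g, η ⁅x, y⁆ z + η ⁅y, z⁆ x + η ⁅z, x⁆ y = 0)
    (N : Set g) (hN : N = {x : g | η x (I x) = 0})
    -- `N(η)` is a Lie subalgebra:
    (hNadd : ∀ x ∈ N, ∀ y ∈ N, x + y ∈ N)
    (hNsmul : ∀ (c : ℝ), ∀ x ∈ N, c • x ∈ N)
    (hNbra : ∀ x ∈ N, ∀ y ∈ N, ⁅x, y⁆ ∈ N)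
    -- `N(η)` is `I`-invariant and holomorphic:
    (hNI : ∀ x ∈ N, I x ∈ N)
    (hNhol : ∀ x ∈ N, ∀ y : g,
      ⁅y, x⁆ + ⁅I y, I x⁆ + I ⁅I y, x⁆ - I ⁅y, I x⁆ ∈ N) :
    ∀ i : ℕ,
      (∀ x ∈ N, ∀ y ∈ LieModule.lowerCentralSeries ℝ g g (i + 1), ⁅x, y⁆ ∈ N) →
      (∀ x ∈ N, ∀ y ∈ LieModule.lowerCentralSeries ℝ g g i, ⁅x, y⁆ ∈ N) :=
  lcs_induction_step_general g I hI hint η halt hinv hpos hclosed N hN hNhol
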